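/- Let (Ω, S) be a coherent configuration with all fibers isomorphic to C_p ≀ C_p and all inter-fiber relations of valency p. Let R be the set of regular relations (those s with ss*s = {s}). Then the union ⋃_{s ∈ R} s is an equivalence relation on Ω. -/

import Mathlib

open Finset
open scoped Classical

/-- A coherent configuration on a finite set `Ω`: a partition `S` of `Ω × Ω` into nonempty
relations such that the diagonal is a union of relations, `S` is closed under transposition,
and the intersection numbers `c r s u` are well defined. -/
structure CoherentConfig (Ω : Type) [Fintype Ω] [DecidableEq Ω] where
  S : Finset (Finset (Ω × Ω))
  nonempty_mem : ∀ s ∈ S, s.Nonempty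
  partition : ∀ x : Ω × Ω, ∃! s, s ∈ S ∧ x ∈ s
  diag_union : ∀ s ∈ S, (∃ x ∈ s, x.1 = x.2) → ∀ y ∈ s, y.1 = y.2
  symm_mem : ∀ s ∈ S, s.image Prod.swap ∈ S
  c : Finset (Ω × Ω) → Finset (Ω × Ω) → Finset (Ω × Ω) → ℕ
  c_spec : ∀ r ∈ S, ∀ s ∈ S, ∀ u ∈ S, ∀ x ∈ u,
    (Finset.univ.filter (fun γ : Ω => (x.1, γ) ∈ r ∧ (γ, x.2) ∈ s)).card = c r s u

variable {Ω : Type} [Fintype Ω] [DecidableEq Ω]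

/-- The diagonal relation of a subset `Δ ⊆ Ω`. -/
def diagRel (Δ : Finset Ω) : Finset (Ω × Ω) := Δ.image (fun d => (d, d))

/-- `Δ` is a fiber of the coherent configuration if its diagonal is a basis relation. -/
def IsFiber (A : CoherentConfig Ω) (Δ : Finset Ω) : Prop := diagRel Δ ∈ A.S

/-- The transpose of a relation. -/
def star (s : Finset (Ω × Ω)) : Finset (Ω × Ω) := s.image Prod.swap

/-- Every point in the domain of `s` has exactly `n` out-neighbours along `s`. -/
def HasValency (s : Finset (Ω × Ω)) (n : ℕ) : Prop :=
  ∀ x ∈ s, (Finset.univ.filter fun γ : Ω => (x.1, γ) ∈ s).card = n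

/-- `s` is a thin basis relation of the fiber scheme on `Δ`. -/
def IsThinOn (A : CoherentConfig Ω) (Δ : Finset Ω) (s : Finset (Ω × Ω)) : Prop :=
  s ∈ A.S ∧ s ⊆ Δ ×ˢ Δ ∧ HasValency s 1

/-- The complex product of two sets of basis relations. -/
def cprod (A : CoherentConfig Ω) (T U : Finset (Finset (Ω × Ω))) : Finset (Finset (Ω × Ω)) :=
  A.S.filter fun u => ∃ t ∈ T, ∃ v ∈ U, A.c t v u ≠ 0

/-- `s` is a regular relation: `s s* s = {s}` as a complex product. -/
def Regular (A : CoherentConfig Ω) (s : Finset (Ω × Ω)) : Prop :=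
  cprod A (cprod A {s} {star s}) {s} = {s}

/-- The fiber scheme on `Δ` is isomorphic to the wreath product `C_p ≀ C_p`:
it has degree `p²`, exactly `p` thin relations forming a closed subset,
and all other basis relations have valency `p`. -/
def WreathFiber (p : ℕ) (A : CoherentConfig Ω) (Δ : Finset Ω) : Prop :=
  IsFiber A Δ ∧ Δ.card = p ^ 2 ∧
  (A.S.filter fun s => IsThinOn A Δ s).card = p ∧
  (∀ s ∈ A.S, s ⊆ Δ ×ˢ Δ → HasValency s 1 ∨ HasValency s p) ∧
  (∀ s t u : Finset (Ω × Ω), IsThinOn A Δ s → IsThinOn A Δ t → u ∈ A.S →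
    A.c s (star t) u ≠ 0 → IsThinOn A Δ u)

/-- The adjacency matrix of a relation. -/
def adjM (s : Finset (Ω × Ω)) : Matrix Ω Ω ℂ := fun α β => if (α, β) ∈ s then 1 else 0

/-!
A basis relation is regular iff it is difunctional (`s s* s ⊆ s` pointwise), i.e. a disjoint union
of rectangles. Hence transposes and diagonal relations are regular, and only transitivity has
content: for regular `s`, `t` and the basis relation `u` through a point of `s ∘ t`, `u` must be
shown difunctional.

Every basis relation has valency `1` or `p`, in both directions. If `s` and `t*` both have valency
`p`, the right blocks of `s` and the left blocks of `t` are classes of the thin closed subset of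
the fiber between them: such a block has `p` points, and a loop-free basis relation of valency `p`
joining two of them would need `p + 1`. Otherwise `s` or `t*` is thin. Either way the blocks of one
side refine those of the other, which makes `s ∘ t` difunctional, and counting valencies gives
`u = s ∘ t` unless `u` is itself thin.
-/

namespace CoherentConfig

section Relations

variable {α : Type} {s t u : Finset (α × α)} {a b b' c d : α}

def outNbhd [Fintype α] [DecidableEq α] (s : Finset (α × α)) (a : α) : Finset α :=
  univ.filter fun c => (a, c) ∈ s

@[simp]
lemma mem_outNbhd [Fintype α] [DecidableEq α] : c ∈ outNbhd s a ↔ (a, c) ∈ s := by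
  simp [outNbhd]

@[simp]
lemma mem_star [DecidableEq α] : (a, b) ∈ star s ↔ (b, a) ∈ s := by
  simp [_root_.star]

lemma star_star_eq [DecidableEq α] (s : Finset (α × α)) : star (star s) = s := by
  ext ⟨a, b⟩
  simp

lemma card_star [DecidableEq α] (s : Finset (α × α)) : (star s).card = s.card :=
  card_image_of_injective s Prod.swap_injective

lemma star_subset_product [DecidableEq α] {Δ Γ : Finset α} (h : s ⊆ Δ ×ˢ Γ) :
    star s ⊆ Γ ×ˢ Δ := by
  rintro ⟨a, b⟩ hab
  have := h (mem_star.1 hab)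
  simp only [mem_product] at this ⊢
  exact this.symm

lemma mem_diagRel [DecidableEq α] {Δ : Finset α} : (a, b) ∈ diagRel Δ ↔ a = b ∧ a ∈ Δ := by
  simp only [diagRel, mem_image, Prod.mk.injEq]
  exact ⟨fun ⟨d, hd, hda, hdb⟩ => ⟨hda ▸ hdb, hda ▸ hd⟩, fun ⟨hab, ha⟩ => ⟨a, ha, rfl, hab⟩⟩

lemma eq_of_hasValency_one [Fintype α] [DecidableEq α] (h : HasValency s 1) (hb : (a, b) ∈ s)
    (hb' : (a, b') ∈ s) : b = b' :=
  card_le_one.1 (h _ hb).le b (mem_outNbhd.2 hb) b' (mem_outNbhd.2 hb')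

def Difunctional (s : Finset (α × α)) : Prop :=
  ∀ ⦃a b c d⦄, (a, b) ∈ s → (c, b) ∈ s → (c, d) ∈ s → (a, d) ∈ s

lemma Difunctional.star [DecidableEq α] (h : Difunctional s) : Difunctional (star s) := by
  intro a b c d hab hcb hcd
  simp only [mem_star] at *
  exact h hcd hcb hab

lemma difunctional_of_forall_eq (h : ∀ x ∈ s, x.1 = x.2) : Difunctional s := by
  intro a b c d hab hcb hcd
  obtain rfl : a = b := h _ hab
  obtain rfl : c = a := h _ hcb
  exact hcd

lemma difunctional_of_hasValency_one [Fintype α] [DecidableEq α] (h : HasValency s 1) :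
    Difunctional s := by
  intro a b c d hab hcb hcd
  exact eq_of_hasValency_one h hcb hcd ▸ hab

/-- The right blocks of `s` refine the left blocks of `t`, where they meet. -/
def RightClassesRefine (s t : Finset (α × α)) : Prop :=
  ∀ ⦃a b b' c⦄, (a, b) ∈ s → (a, b') ∈ s → (b, c) ∈ t → ∃ c', (b, c') ∈ t ∧ (b', c') ∈ t

lemma rightClassesRefine_of_hasValency_one [Fintype α] [DecidableEq α] (h : HasValency s 1) :
    RightClassesRefine s t := by
  intro a b b' c hb hb' hc
  exact ⟨c, hc, eq_of_hasValency_one h hb hb' ▸ hc⟩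

lemma difunctional_of_comp (ht : Difunctional t) (hst : RightClassesRefine s t)
    (hu : ∀ a c, (a, c) ∈ u ↔ ∃ b, (a, b) ∈ s ∧ (b, c) ∈ t) : Difunctional u := by
  intro a b c d hab hcb hcd
  obtain ⟨β₁, hs₁, ht₁⟩ := (hu a b).1 hab
  obtain ⟨β₂, hs₂, ht₂⟩ := (hu c b).1 hcb
  obtain ⟨β₃, hs₃, ht₃⟩ := (hu c d).1 hcd
  obtain ⟨c₀, ht₂₀, ht₃₀⟩ := hst hs₂ hs₃ ht₂
  exact (hu a d).2 ⟨β₁, hs₁, ht ht₁ (ht ht₃₀ ht₂₀ ht₂) ht₃⟩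

lemma difunctional_of_subset_comp [Fintype α] [DecidableEq α] (ht : Difunctional t)
    (hst : RightClassesRefine s t) (hus : ∀ a c, (a, c) ∈ u → ∃ b, (a, b) ∈ s ∧ (b, c) ∈ t)
    (hcard : ∀ a b, (a, b) ∈ s → (outNbhd t b).card ≤ (outNbhd u a).card) :
    Difunctional u := by
  refine difunctional_of_comp ht hst fun a c => ⟨hus a c, ?_⟩
  rintro ⟨b, hab, hbc⟩
  have hsub : outNbhd u a ⊆ outNbhd t b := by
    intro c' hc'
    obtain ⟨b', hab', hb'c'⟩ := hus a c' (mem_outNbhd.1 hc')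
    obtain ⟨c₀, hb'c₀, hbc₀⟩ := hst hab' hab hb'c'
    exact mem_outNbhd.2 (ht hbc₀ hb'c₀ hb'c')
  rw [← mem_outNbhd, eq_of_subset_of_card_le hsub (hcard a b hab)]
  exact mem_outNbhd.2 hbc

def leftClass [Fintype α] [DecidableEq α] (t : Finset (α × α)) (b : α) : Finset α :=
  univ.filter fun b' => ∃ c, (b, c) ∈ t ∧ (b', c) ∈ t

@[simp]
lemma mem_leftClass [Fintype α] [DecidableEq α] :
    b' ∈ leftClass t b ↔ ∃ c, (b, c) ∈ t ∧ (b', c) ∈ t := by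
  simp [leftClass]

lemma card_leftClass [Fintype α] [DecidableEq α] {n : ℕ} (ht : Difunctional t)
    (hval : HasValency (star t) n) (hbc : (b, c) ∈ t) : (leftClass t b).card = n := by
  have hclass : leftClass t b = outNbhd (star t) c := by
    ext b'
    simp only [mem_leftClass, mem_outNbhd, mem_star]
    exact ⟨fun ⟨_, hbc', hb'c'⟩ => ht hb'c' hbc' hbc, fun hb'c => ⟨c, hbc, hb'c⟩⟩
  rw [hclass]
  exact hval _ (mem_star.2 hbc)

end Relations

variable {A : CoherentConfig Ω} {r s t u v e : Finset (Ω × Ω)} {x : Ω × Ω}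
  {Δ Δ' Γ Γ' : Finset Ω} {a a' b b' c : Ω} {n p : ℕ}

lemma star_mem (hs : s ∈ A.S) : star s ∈ A.S :=
  A.symm_mem s hs

lemma exists_mem (A : CoherentConfig Ω) (x : Ω × Ω) : ∃ s ∈ A.S, x ∈ s :=
  (A.partition x).exists

lemma eq_of_mem_of_mem (hs : s ∈ A.S) (ht : t ∈ A.S) (hxs : x ∈ s) (hxt : x ∈ t) : s = t :=
  (A.partition x).unique ⟨hs, hxs⟩ ⟨ht, hxt⟩

lemma c_ne_zero_iff (hr : r ∈ A.S) (hv : v ∈ A.S) (hu : u ∈ A.S) (hx : x ∈ u) :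
    A.c r v u ≠ 0 ↔ ∃ γ, (x.1, γ) ∈ r ∧ (γ, x.2) ∈ v := by
  rw [← A.c_spec r hr v hv u hu x hx, card_ne_zero, filter_nonempty_iff]
  simp

lemma cprod_subset (T U : Finset (Finset (Ω × Ω))) : cprod A T U ⊆ A.S :=
  filter_subset _ _

lemma mem_cprod_iff {T U : Finset (Finset (Ω × Ω))} (hT : T ⊆ A.S) (hU : U ⊆ A.S)
    (hu : u ∈ A.S) (hx : x ∈ u) :
    u ∈ cprod A T U ↔ ∃ t ∈ T, ∃ v ∈ U, ∃ γ, (x.1, γ) ∈ t ∧ (γ, x.2) ∈ v := by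
  simp only [cprod, mem_filter, hu, true_and]
  exact exists_congr fun t => and_congr_right fun ht => exists_congr fun v =>
    and_congr_right fun hv => c_ne_zero_iff (hT ht) (hU hv) hu hx

lemma mem_cprod_cprod_iff (hs : s ∈ A.S) (hu : u ∈ A.S) (hx : x ∈ u) :
    u ∈ cprod A (cprod A {s} {star s}) {s} ↔
      ∃ b c, (x.1, b) ∈ s ∧ (c, b) ∈ s ∧ (c, x.2) ∈ s := by
  have hsS : {s} ⊆ A.S := singleton_subset_iff.2 hs
  have hs'S : {star s} ⊆ A.S := singleton_subset_iff.2 (star_mem hs)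
  rw [mem_cprod_iff (cprod_subset _ _) hsS hu hx]
  simp only [mem_singleton, exists_eq_left]
  constructor
  · rintro ⟨r, hr, c, hxr, hcx⟩
    obtain ⟨b, hb, hcb⟩ := by
      simpa using (mem_cprod_iff hsS hs'S (cprod_subset _ _ hr) hxr).1 hr
    exact ⟨b, c, hb, hcb, hcx⟩
  · rintro ⟨b, c, hb, hcb, hcx⟩
    obtain ⟨r, hr, hxr⟩ := A.exists_mem (x.1, c)
    refine ⟨r, (mem_cprod_iff hsS hs'S hr hxr).2 ?_, c, hxr, hcx⟩
    simpa using ⟨b, hb, hcb⟩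

lemma regular_iff_difunctional (hs : s ∈ A.S) : Regular A s ↔ Difunctional s := by
  refine ⟨fun hreg a b c d hab hcb hcd => ?_, fun hs' => ?_⟩
  · obtain ⟨u, hu, hadu⟩ := A.exists_mem (a, d)
    have hus : u ∈ ({s} : Finset _) :=
      hreg ▸ (mem_cprod_cprod_iff hs hu hadu).2 ⟨b, c, hab, hcb, hcd⟩
    exact mem_singleton.1 hus ▸ hadu
  · ext u
    rw [mem_singleton]
    constructor
    · intro hu
      have huS : u ∈ A.S := cprod_subset _ _ hu
      obtain ⟨x, hx⟩ := A.nonempty_mem u huS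
      obtain ⟨b, c, hb, hcb, hcx⟩ := (mem_cprod_cprod_iff hs huS hx).1 hu
      exact eq_of_mem_of_mem huS hs hx (hs' hb hcb hcx)
    · rintro rfl
      obtain ⟨x, hx⟩ := A.nonempty_mem u hs
      exact (mem_cprod_cprod_iff hs hs hx).2 ⟨x.2, x.1, hx, hx, hx⟩

lemma exists_isFiber_mem (A : CoherentConfig Ω) (a : Ω) : ∃ Δ, IsFiber A Δ ∧ a ∈ Δ := by
  obtain ⟨e, he, hae⟩ := A.exists_mem (a, a)
  have hdiag := A.diag_union e he ⟨(a, a), hae, rfl⟩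
  refine ⟨e.image Prod.fst, ?_, mem_image.2 ⟨(a, a), hae, rfl⟩⟩
  suffices diagRel (e.image Prod.fst) = e by rwa [IsFiber, this]
  ext ⟨b, c⟩
  rw [mem_diagRel, mem_image]
  constructor
  · rintro ⟨rfl, ⟨b', c'⟩, hbc', rfl⟩
    obtain rfl : b' = c' := hdiag _ hbc'
    exact hbc'
  · exact fun hbc => ⟨hdiag _ hbc, (b, c), hbc, rfl⟩

lemma fiber_eq_of_mem (hΔ : IsFiber A Δ) (hΔ' : IsFiber A Δ') (ha : a ∈ Δ) (ha' : a ∈ Δ') :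
    Δ = Δ' := by
  have := eq_of_mem_of_mem hΔ hΔ' (mem_diagRel.2 ⟨rfl, ha⟩) (mem_diagRel.2 ⟨rfl, ha'⟩)
  ext b
  simpa [mem_diagRel] using congrArg (fun r => (b, b) ∈ r) this

lemma subset_product_of_mem (hs : s ∈ A.S) (hΔ : IsFiber A Δ) (hΓ : IsFiber A Γ) (hx : x ∈ s)
    (hx₁ : x.1 ∈ Δ) (hx₂ : x.2 ∈ Γ) : s ⊆ Δ ×ˢ Γ := by
  have hleft := (c_ne_zero_iff hΔ hs hs hx).2 ⟨x.1, mem_diagRel.2 ⟨rfl, hx₁⟩, hx⟩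
  have hright := (c_ne_zero_iff hs hΓ hs hx).2 ⟨x.2, hx, mem_diagRel.2 ⟨rfl, hx₂⟩⟩
  intro y hy
  obtain ⟨γ, hγ, -⟩ := (c_ne_zero_iff hΔ hs hs hy).1 hleft
  obtain ⟨γ', -, hγ'⟩ := (c_ne_zero_iff hs hΓ hs hy).1 hright
  obtain ⟨rfl, hy₁⟩ := mem_diagRel.1 hγ
  obtain ⟨rfl, hy₂⟩ := mem_diagRel.1 hγ'
  exact mem_product.2 ⟨hy₁, hy₂⟩

lemma exists_subset_product (hs : s ∈ A.S) (hx : x ∈ s) :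
    ∃ Δ Γ, IsFiber A Δ ∧ IsFiber A Γ ∧ x.1 ∈ Δ ∧ x.2 ∈ Γ ∧ s ⊆ Δ ×ˢ Γ := by
  obtain ⟨Δ, hΔ, hx₁⟩ := A.exists_isFiber_mem x.1
  obtain ⟨Γ, hΓ, hx₂⟩ := A.exists_isFiber_mem x.2
  exact ⟨Δ, Γ, hΔ, hΓ, hx₁, hx₂, subset_product_of_mem hs hΔ hΓ hx hx₁ hx₂⟩

lemma card_outNbhd_eq (hu : u ∈ A.S) (hΔ : IsFiber A Δ) (ha : a ∈ Δ) (ha' : a' ∈ Δ) :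
    (outNbhd u a).card = (outNbhd u a').card := by
  have key : ∀ a ∈ Δ, (outNbhd u a).card = A.c u (star u) (diagRel Δ) := fun a ha => by
    rw [← A.c_spec u hu _ (star_mem hu) _ hΔ (a, a) (mem_diagRel.2 ⟨rfl, ha⟩)]
    congr 1
    ext γ
    simp
  rw [key a ha, key a' ha']

lemma card_outNbhd_eq_of_mem (hu : u ∈ A.S) (hs : s ∈ A.S) (hab : (a, b) ∈ s)
    (hab' : (a', b') ∈ s) : (outNbhd u a).card = (outNbhd u a').card := by
  obtain ⟨Δ, Γ, hΔ, -, ha, -, hsub⟩ := exists_subset_product hs hab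
  exact card_outNbhd_eq hu hΔ ha (mem_product.1 (hsub hab')).1

lemma card_outNbhd_of_hasValency (h : HasValency s n) (hs : s ∈ A.S) (hΔ : IsFiber A Δ)
    (hsub : s ⊆ Δ ×ˢ Γ) (hx : x ∈ s) (ha : a ∈ Δ) : (outNbhd s a).card = n :=
  (card_outNbhd_eq hs hΔ ha (mem_product.1 (hsub hx)).1).trans (h x hx)

lemma card_eq_card_mul_of_hasValency (hs : s ∈ A.S) (hΔ : IsFiber A Δ) (hsub : s ⊆ Δ ×ˢ Γ)
    (hx : x ∈ s) (h : HasValency s n) : s.card = Δ.card * n := by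
  have hfst : ∀ y ∈ s, y.1 ∈ Δ := fun y hy => (mem_product.1 (hsub hy)).1
  rw [card_eq_sum_card_fiberwise hfst, ← smul_eq_mul, ← sum_const]
  refine sum_congr rfl fun a ha => ?_
  have hfiber : s.filter (·.1 = a) = (outNbhd s a).image (Prod.mk a) := by
    ext ⟨b, c⟩
    simp only [mem_filter, mem_image, mem_outNbhd, Prod.mk.injEq]
    exact ⟨fun ⟨hbc, hb⟩ => ⟨c, hb ▸ hbc, hb.symm, rfl⟩,
      fun ⟨_, hac, hab, hc⟩ => ⟨hab ▸ hc ▸ hac, hab.symm⟩⟩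
  rw [hfiber, card_image_of_injective _ (Prod.mk_right_injective a),
    card_outNbhd_of_hasValency h hs hΔ hsub hx ha]

structure IsWreathConfig (p : ℕ) (A : CoherentConfig Ω) : Prop where
  wreathFiber : ∀ Δ : Finset Ω, IsFiber A Δ → WreathFiber p A Δ
  hasValency_of_ne : ∀ u ∈ A.S, ∀ Δ Γ : Finset Ω, IsFiber A Δ → IsFiber A Γ → Δ ≠ Γ →
    u ⊆ Δ ×ˢ Γ → HasValency u p

lemma IsWreathConfig.hasValency_one_or_p (hA : IsWreathConfig p A) (hp : 1 < p) (hs : s ∈ A.S) :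
    (HasValency s 1 ∧ HasValency (star s) 1) ∨ (HasValency s p ∧ HasValency (star s) p) := by
  obtain ⟨x, hx⟩ := A.nonempty_mem s hs
  obtain ⟨Δ, Γ, hΔ, hΓ, hx₁, -, hsub⟩ := exists_subset_product hs hx
  have hsub' := star_subset_product hsub
  by_cases hΔΓ : Δ = Γ
  · subst hΔΓ
    have hx' : (x.2, x.1) ∈ star s := mem_star.2 hx
    have hΔpos : 0 < Δ.card := card_pos.2 ⟨_, hx₁⟩
    have hsame : ∀ n m, HasValency s n → HasValency (star s) m → n = m := fun n m hn hm =>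
      Nat.eq_of_mul_eq_mul_left hΔpos <| by
        rw [← card_eq_card_mul_of_hasValency hs hΔ hsub hx hn, ← card_star,
          card_eq_card_mul_of_hasValency (star_mem hs) hΔ hsub' hx' hm]
    obtain ⟨-, -, -, hval, -⟩ := hA.wreathFiber Δ hΔ
    rcases hval s hs hsub with h1 | hp₁ <;>
      rcases hval (star s) (star_mem hs) hsub' with h1' | hp₁'
    · exact Or.inl ⟨h1, h1'⟩
    · exact absurd (hsame _ _ h1 hp₁') hp.ne
    · exact absurd (hsame _ _ hp₁ h1') hp.ne'
    · exact Or.inr ⟨hp₁, hp₁'⟩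
  · exact Or.inr ⟨hA.hasValency_of_ne s hs Δ Γ hΔ hΓ hΔΓ hsub,
      hA.hasValency_of_ne _ (star_mem hs) Γ Δ hΓ hΔ (Ne.symm hΔΓ) hsub'⟩

lemma IsWreathConfig.card_outNbhd_le (hA : IsWreathConfig p A) (hp : 1 < p) (ht : t ∈ A.S)
    (b : Ω) : (outNbhd t b).card ≤ p := by
  obtain hempty | ⟨c, hc⟩ := (outNbhd t b).eq_empty_or_nonempty
  · simp [hempty]
  rcases hA.hasValency_one_or_p hp ht with ⟨h, -⟩ | ⟨h, -⟩
  · exact (h _ (mem_outNbhd.1 hc)).trans_le hp.le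
  · exact (h _ (mem_outNbhd.1 hc)).le

/-- The class of `b` in the equivalence relation given by the thin closed subset of the fiber. -/
noncomputable def thinClass (A : CoherentConfig Ω) (Δ : Finset Ω) (b : Ω) : Finset Ω :=
  (A.S.filter (IsThinOn A Δ)).biUnion (outNbhd · b)

lemma card_thinClass (hΔ : WreathFiber p A Δ) (hb : b ∈ Δ) : (thinClass A Δ b).card = p := by
  obtain ⟨hfib, -, hthin, -, -⟩ := hΔ
  rw [thinClass, card_biUnion]
  · have hone : ∀ e ∈ A.S.filter (IsThinOn A Δ), (outNbhd e b).card = 1 := by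
      intro e he
      obtain ⟨he, hsub, h1⟩ := (mem_filter.1 he).2
      obtain ⟨x, hx⟩ := A.nonempty_mem e he
      exact card_outNbhd_of_hasValency h1 he hfib hsub hx hb
    rw [sum_congr rfl hone, sum_const, smul_eq_mul, mul_one, hthin]
  · intro e he e' he' hne
    refine disjoint_left.2 fun c hc hc' => hne ?_
    exact eq_of_mem_of_mem (mem_filter.1 he).1 (mem_filter.1 he').1 (mem_outNbhd.1 hc)
      (mem_outNbhd.1 hc')

/-- As `c t t* e ≠ 0`, the `e`-neighbourhood of `b` lies in the left class of `b`, which has `p`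
points including `b`; a loop-free `e` of valency `p` does not fit. -/
lemma isThinOn_of_mem_leftClass (hp : 1 < p) (hΔ : WreathFiber p A Δ) (ht : t ∈ A.S)
    (htd : Difunctional t) (htΔ : t ⊆ Δ ×ˢ Γ) (hval : HasValency (star t) p)
    (hb' : b' ∈ leftClass t b) (he : e ∈ A.S) (hbe : (b, b') ∈ e) : IsThinOn A Δ e := by
  obtain ⟨hfib, -, -, hval1p, -⟩ := hΔ
  obtain ⟨c, hbc, hb'c⟩ := mem_leftClass.1 hb'
  have hsub : e ⊆ Δ ×ˢ Δ := subset_product_of_mem he hfib hfib hbe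
    (mem_product.1 (htΔ hbc)).1 (mem_product.1 (htΔ hb'c)).1
  refine ⟨he, hsub, (hval1p e he hsub).resolve_right fun hep => ?_⟩
  have hcard : (outNbhd e b).card = p := hep _ hbe
  have hc := (c_ne_zero_iff ht (star_mem ht) he hbe).2 ⟨c, hbc, mem_star.2 hb'c⟩
  have hsubset : insert b (outNbhd e b) ⊆ leftClass t b := by
    refine insert_subset (mem_leftClass.2 ⟨c, hbc, hbc⟩) fun d hd => ?_
    obtain ⟨γ, hbγ, hγd⟩ := (c_ne_zero_iff ht (star_mem ht) he (mem_outNbhd.1 hd)).1 hc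
    exact mem_leftClass.2 ⟨γ, hbγ, mem_star.1 hγd⟩
  have hb : b ∉ outNbhd e b := fun hbb => by
    have hdiag := A.diag_union e he ⟨_, mem_outNbhd.1 hbb, rfl⟩
    have : (outNbhd e b).card ≤ 1 := card_le_one.2 fun d hd d' hd' =>
      (hdiag _ (mem_outNbhd.1 hd)).symm.trans (hdiag _ (mem_outNbhd.1 hd'))
    omega
  have := card_le_card hsubset
  rw [card_insert_of_notMem hb, hcard, card_leftClass htd hval hbc] at this
  omega

lemma leftClass_eq_thinClass (hp : 1 < p) (hΔ : WreathFiber p A Δ) (ht : t ∈ A.S)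
    (htd : Difunctional t) (htΔ : t ⊆ Δ ×ˢ Γ) (hval : HasValency (star t) p) (hbc : (b, c) ∈ t) :
    leftClass t b = thinClass A Δ b := by
  refine eq_of_subset_of_card_le (fun b' hb' => ?_) ?_
  · obtain ⟨e, he, hbe⟩ := A.exists_mem (b, b')
    exact mem_biUnion.2 ⟨e, mem_filter.2
      ⟨he, isThinOn_of_mem_leftClass hp hΔ ht htd htΔ hval hb' he hbe⟩, mem_outNbhd.2 hbe⟩
  · rw [card_thinClass hΔ (mem_product.1 (htΔ hbc)).1, card_leftClass htd hval hbc]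

lemma rightClassesRefine_of_hasValency (hp : 1 < p) (hΔ : WreathFiber p A Δ) (hs : s ∈ A.S)
    (ht : t ∈ A.S) (hsd : Difunctional s) (htd : Difunctional t) (hsΔ : s ⊆ Γ ×ˢ Δ)
    (htΔ : t ⊆ Δ ×ˢ Γ') (hsval : HasValency s p) (htval : HasValency (star t) p) :
    RightClassesRefine s t := by
  intro a b b' c hab hab' hbc
  have hright : leftClass (star s) b = thinClass A Δ b :=
    leftClass_eq_thinClass hp hΔ (star_mem hs) hsd.star (star_subset_product hsΔ)
      (by rwa [star_star_eq]) (mem_star.2 hab)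
  have hb' : b' ∈ leftClass t b := by
    rw [leftClass_eq_thinClass hp hΔ ht htd htΔ htval hbc, ← hright]
    exact mem_leftClass.2 ⟨a, mem_star.2 hab, mem_star.2 hab'⟩
  exact mem_leftClass.1 hb'

lemma IsWreathConfig.rightClassesRefine_or (hA : IsWreathConfig p A) (hp : 1 < p)
    (hs : s ∈ A.S) (ht : t ∈ A.S) (hsd : Difunctional s) (htd : Difunctional t)
    (hab : (a, b) ∈ s) (hbc : (b, c) ∈ t) :
    RightClassesRefine s t ∨ RightClassesRefine (star t) (star s) := by
  rcases hA.hasValency_one_or_p hp hs with ⟨hs1, -⟩ | ⟨hsp, -⟩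
  · exact Or.inl (rightClassesRefine_of_hasValency_one hs1)
  rcases hA.hasValency_one_or_p hp ht with ⟨-, ht1⟩ | ⟨-, htp⟩
  · exact Or.inr (rightClassesRefine_of_hasValency_one ht1)
  obtain ⟨Γ, Δ, -, hΔ, -, hb, hsΔ⟩ := exists_subset_product hs hab
  obtain ⟨Δ', Γ', hΔ', -, hb', -, htΔ⟩ := exists_subset_product ht hbc
  obtain rfl := fiber_eq_of_mem hΔ hΔ' hb hb'
  exact Or.inl
    (rightClassesRefine_of_hasValency hp (hA.wreathFiber Δ hΔ) hs ht hsd htd hsΔ htΔ hsp htp)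

lemma IsWreathConfig.difunctional_of_mem_comp (hA : IsWreathConfig p A) (hp : 1 < p)
    (hs : s ∈ A.S) (ht : t ∈ A.S) (hu : u ∈ A.S) (hsd : Difunctional s) (htd : Difunctional t)
    (hab : (a, b) ∈ s) (hbc : (b, c) ∈ t) (hac : (a, c) ∈ u) : Difunctional u := by
  rcases hA.hasValency_one_or_p hp hu with ⟨hu1, -⟩ | ⟨hup, hup'⟩
  · exact difunctional_of_hasValency_one hu1
  have hus : ∀ a' c', (a', c') ∈ u → ∃ b', (a', b') ∈ s ∧ (b', c') ∈ t := fun a' c' h =>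
    (c_ne_zero_iff hs ht hu h).1 ((c_ne_zero_iff hs ht hu hac).2 ⟨b, hab, hbc⟩)
  rcases hA.rightClassesRefine_or hp hs ht hsd htd hab hbc with h | h
  · refine difunctional_of_subset_comp htd h hus fun a' b' hab' => ?_
    rw [card_outNbhd_eq_of_mem hu hs hab' hab]
    exact (hA.card_outNbhd_le hp ht b').trans (hup _ hac).ge
  · have hu' : Difunctional (star u) := by
      refine difunctional_of_subset_comp hsd.star h (fun c' a' h' => ?_) fun c' b' hcb' => ?_
      · obtain ⟨b', h1, h2⟩ := hus a' c' (mem_star.1 h')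
        exact ⟨b', mem_star.2 h2, mem_star.2 h1⟩
      · rw [card_outNbhd_eq_of_mem (star_mem hu) (star_mem ht) hcb' (mem_star.2 hbc)]
        exact (hA.card_outNbhd_le hp (star_mem hs) b').trans (hup' _ (mem_star.2 hac)).ge
    simpa only [star_star_eq] using hu'.star

end CoherentConfig

open CoherentConfig

theorem stmt13 (p : ℕ) (hp : p.Prime) (A : CoherentConfig Ω)
    (hfib : ∀ Δ : Finset Ω, IsFiber A Δ → WreathFiber p A Δ)
    (hinter : ∀ u ∈ A.S, ∀ Δ Γ : Finset Ω, IsFiber A Δ → IsFiber A Γ → Δ ≠ Γ →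
      u ⊆ Δ ×ˢ Γ → HasValency u p) :
    Equivalence (fun α β : Ω => ∃ s ∈ A.S, Regular A s ∧ (α, β) ∈ s) := by
  have hA : IsWreathConfig p A := ⟨hfib, hinter⟩
  refine ⟨fun a => ?_, ?_, ?_⟩
  · obtain ⟨e, he, hae⟩ := A.exists_mem (a, a)
    exact ⟨e, he, (regular_iff_difunctional he).2
      (difunctional_of_forall_eq (A.diag_union e he ⟨_, hae, rfl⟩)), hae⟩
  · rintro a b ⟨s, hs, hreg, hab⟩
    exact ⟨star s, star_mem hs, (regular_iff_difunctional (star_mem hs)).2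
      ((regular_iff_difunctional hs).1 hreg).star, mem_star.2 hab⟩
  · rintro a b c ⟨s, hs, hsreg, hab⟩ ⟨t, ht, htreg, hbc⟩
    obtain ⟨u, hu, hac⟩ := A.exists_mem (a, c)
    exact ⟨u, hu, (regular_iff_difunctional hu).2 (hA.difunctional_of_mem_comp hp.one_lt hs ht hu
      ((regular_iff_difunctional hs).1 hsreg) ((regular_iff_difunctional ht).1 htreg) hab hbc hac),
      hac⟩
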